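/- Let J be an invariant mapping cone and let k = max{rank(e) : e a projection in M_n with Ad e ∈ J}, and assume k ≥ 2. If e is a projection in M_n with rank(e) ≤ k, then Ad e ∈ J. -/

import Mathlib

open scoped ComplexOrder Kronecker
open Matrix

namespace Paper

/-- The algebra `M_n` of `n × n` complex matrices. -/
abbrev Mat (n : ℕ) := Matrix (Fin n) (Fin n) ℂ

/-- Linear maps of `M_n` into itself. -/
abbrev MatMap (n : ℕ) := Mat n →ₗ[ℂ] Mat n

/-- The matrix algebra `M_n ⊗ M_n`, realized as matrices indexed by pairs. -/
abbrev BigMat (n : ℕ) := Matrix (Fin n × Fin n) (Fin n × Fin n) ℂ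

variable {n : ℕ}

/-- A map `φ : M_n → M_n` is positive if it maps positive semidefinite matrices to
positive semidefinite matrices.  The set of such maps is the cone `P`. -/
def IsPosMap (φ : MatMap n) : Prop :=
  ∀ a : Mat n, a.PosSemidef → (φ a).PosSemidef

/-- The Choi matrix `C_φ = Σ_{i,j} e_{ij} ⊗ φ(e_{ij})`. -/
noncomputable def choiMatrix (φ : MatMap n) : BigMat n :=
  Matrix.of fun p q => φ (Matrix.single p.1 q.1 1) p.2 q.2

/-- `φ` is completely positive iff its Choi matrix is positive semidefinite.
The set of such maps is the cone `CP`. -/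
def IsCP (φ : MatMap n) : Prop := (choiMatrix φ).PosSemidef

/-- The transpose map `a ↦ aᵀ` on `M_n`, as a linear map. -/
noncomputable def transposeMap (n : ℕ) : MatMap n where
  toFun a := a.transpose
  map_add' a b := Matrix.transpose_add a b
  map_smul' c a := Matrix.transpose_smul c a

/-- `φ` is co-completely positive if `t ∘ φ` is completely positive.  The set of
such maps is the cone `coCP`. -/
def IsCoCP (φ : MatMap n) : Prop := IsCP ((transposeMap n) ∘ₗ φ)

/-- A state on `M_n`: a positive linear functional with `ω(1) = 1`. -/
def IsState (ω : Mat n →ₗ[ℂ] ℂ) : Prop :=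
  (∀ a : Mat n, a.PosSemidef → 0 ≤ ω a) ∧ ω 1 = 1

/-- `φ` is super-positive if `φ(a) = Σ_i ω_i(a) b_i` with each `b_i` positive
semidefinite and each `ω_i` a state.  The set of such maps is the cone `SP`. -/
def IsSP (φ : MatMap n) : Prop :=
  ∃ (k : ℕ) (b : Fin k → Mat n) (ω : Fin k → (Mat n →ₗ[ℂ] ℂ)),
    (∀ i, (b i).PosSemidef) ∧ (∀ i, IsState (ω i)) ∧
      ∀ a : Mat n, φ a = ∑ i, ω i a • b i

/-- `ψ = φ*`, i.e. `Tr(φ(a) b) = Tr(a ψ(b))` for all `a, b`. -/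
def IsAdjointPair (φ ψ : MatMap n) : Prop :=
  ∀ a b : Mat n, (φ a * b).trace = (a * ψ b).trace

/-- The map `φ^t : a ↦ φ(aᵀ)ᵀ`. -/
noncomputable def mapTranspose (φ : MatMap n) : MatMap n :=
  transposeMap n ∘ₗ φ ∘ₗ transposeMap n

/-- A (symmetric) mapping cone: a nonzero closed convex cone of positive maps of `M_n`
into itself, closed under compositions `α ∘ φ ∘ β` with `α, β` completely positive,
and closed under `φ ↦ φ*` and `φ ↦ φ^t`. -/
structure IsMappingCone (J : Set (MatMap n)) : Prop where
  pos : ∀ φ ∈ J, IsPosMap φ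
  nonzero : ∃ φ ∈ J, φ ≠ 0
  closed : IsClosed ((fun φ : MatMap n => (φ : Mat n → Mat n)) '' J)
  add_mem : ∀ φ ∈ J, ∀ ψ ∈ J, φ + ψ ∈ J
  smul_mem : ∀ c : ℝ, 0 ≤ c → ∀ φ ∈ J, (c : ℂ) • φ ∈ J
  comp_mem : ∀ φ ∈ J, ∀ α β : MatMap n, IsCP α → IsCP β → α ∘ₗ φ ∘ₗ β ∈ J
  adjoint_mem : ∀ φ ∈ J, ∀ ψ : MatMap n, IsAdjointPair φ ψ → ψ ∈ J
  transpose_mem : ∀ φ ∈ J, mapTranspose φ ∈ J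

/-- An invariant mapping cone: a mapping cone closed under compositions
`α ∘ φ ∘ β` with `α, β` arbitrary positive maps. -/
structure IsInvariantMappingCone (J : Set (MatMap n)) extends IsMappingCone J : Prop where
  comp_pos_mem : ∀ φ ∈ J, ∀ α β : MatMap n, IsPosMap α → IsPosMap β → α ∘ₗ φ ∘ₗ β ∈ J

/-- The dual cone `J° = {φ ∈ P : Tr(C_φ C_ψ) ≥ 0 ∀ ψ ∈ J}`. -/
def dualCone (J : Set (MatMap n)) : Set (MatMap n) :=
  {φ | IsPosMap φ ∧ ∀ ψ ∈ J, 0 ≤ (choiMatrix φ * choiMatrix ψ).trace}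

/-- The linear functional `φ̃` on `M_n ⊗ M_n` with `φ̃(a ⊗ b) = Tr(φ(a) bᵀ)`;
equivalently the functional with density matrix `C_φᵗ`. -/
noncomputable def tilde (φ : MatMap n) : BigMat n →ₗ[ℂ] ℂ where
  toFun x := ((choiMatrix φ)ᵀ * x).trace
  map_add' x y := by simp [Matrix.mul_add]
  map_smul' c x := by simp [Matrix.mul_smul]

/-- A positive linear functional on a matrix algebra. -/
def IsPosFunctional {m : Type*} [Fintype m] [DecidableEq m]
    (f : Matrix m m ℂ →ₗ[ℂ] ℂ) : Prop :=
  ∀ x : Matrix m m ℂ, x.PosSemidef → 0 ≤ f x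

/-- The map `ι ⊗ α` on `M_n ⊗ M_n`, acting as `α` on each block. -/
noncomputable def idTensor (α : MatMap n) : BigMat n →ₗ[ℂ] BigMat n where
  toFun x := Matrix.of fun p q => α (Matrix.of fun k l => x (p.1, k) (q.1, l)) p.2 q.2
  map_add' x y := by
    ext p q
    have h : (Matrix.of fun k l => x (p.1, k) (q.1, l) + y (p.1, k) (q.1, l))
        = (Matrix.of fun k l => x (p.1, k) (q.1, l)) +
          (Matrix.of fun k l => y (p.1, k) (q.1, l)) := by
      ext k l; simp
    simp only [Matrix.of_apply, Matrix.add_apply]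
    rw [h, map_add, Matrix.add_apply]
  map_smul' c x := by
    ext p q
    have h : (Matrix.of fun k l => c * x (p.1, k) (q.1, l))
        = c • (Matrix.of fun k l => x (p.1, k) (q.1, l)) := by
      ext k l; simp
    simp only [Matrix.of_apply, Matrix.smul_apply, RingHom.id_apply, smul_eq_mul]
    rw [h, _root_.map_smul, Matrix.smul_apply, smul_eq_mul]

/-- `Ad V : x ↦ V* x V`. -/
noncomputable def adMap (V : Mat n) : MatMap n where
  toFun x := Vᴴ * x * V
  map_add' x y := by simp [Matrix.mul_add, Matrix.add_mul]
  map_smul' c x := by simp [Matrix.mul_smul, Matrix.smul_mul]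

/-- An orthogonal projection in `M_n`. -/
def IsProjection (e : Mat n) : Prop := e * e = e ∧ eᴴ = e

/-- `e` is the range projection of the matrix `a`: the smallest projection `e`
with `e a = a`. -/
def IsRangeProjection (e a : Mat n) : Prop :=
  IsProjection e ∧ e * a = a ∧ ∀ f : Mat n, IsProjection f → f * a = a → f * e = e

/-- `e` is the support projection of the positive map `φ`: the smallest projection
`e` with `φ(e a e) = φ(a)` for all `a`. -/
def IsSupportProjection (e : Mat n) (φ : MatMap n) : Prop :=
  IsProjection e ∧ (∀ a : Mat n, φ (e * a * e) = φ a) ∧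
    ∀ f : Mat n, IsProjection f → (∀ a : Mat n, φ (f * a * f) = φ a) → f * e = e

/-- `D_2`: the smallest invariant mapping cone containing `Ad e` for all rank 2
projections `e`. -/
def D2 (n : ℕ) : Set (MatMap n) :=
  ⋂₀ {J : Set (MatMap n) | IsInvariantMappingCone J ∧
      ∀ e : Mat n, IsProjection e → e.rank = 2 → adMap e ∈ J}

/-- The invariant mapping cone generated by a map `φ`. -/
def genInvCone (φ : MatMap n) : Set (MatMap n) :=
  ⋂₀ {J : Set (MatMap n) | IsInvariantMappingCone J ∧ φ ∈ J}

/-- The smallest mapping cone containing two given sets of maps. -/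
def coneJoin (A B : Set (MatMap n)) : Set (MatMap n) :=
  ⋂₀ {J : Set (MatMap n) | IsMappingCone J ∧ A ⊆ J ∧ B ⊆ J}

/-- `φ` is decomposable, i.e. `φ ∈ CP ⋁ coCP`: a sum of a completely positive and a
co-completely positive map. -/
def Decomposable (φ : MatMap n) : Prop :=
  ∃ α β : MatMap n, IsCP α ∧ IsCoCP β ∧ φ = α + β

/-- `φ` is a PPT-map: both `φ̃` and `φ̃ ∘ (ι ⊗ t)` are positive linear functionals. -/
def IsPPTMap (φ : MatMap n) : Prop :=
  IsPosFunctional (tilde φ) ∧ IsPosFunctional (tilde φ ∘ₗ idTensor (transposeMap n))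

/-- `φ` is an extremal positive map. -/
def IsExtremal (φ : MatMap n) : Prop :=
  IsPosMap φ ∧ ∀ ψ : MatMap n, IsPosMap ψ → IsPosMap (φ - ψ) →
    ∃ l : ℝ, 0 ≤ l ∧ l ≤ 1 ∧ ψ = (l : ℂ) • φ

/-- A `*`-automorphism of `M_n`. -/
def IsStarAut (φ : MatMap n) : Prop :=
  Function.Bijective φ ∧ (∀ a b : Mat n, φ (a * b) = φ a * φ b) ∧
    ∀ a : Mat n, φ aᴴ = (φ a)ᴴ

/-- A `*`-anti-automorphism of `M_n`. -/
def IsStarAntiAut (φ : MatMap n) : Prop :=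
  Function.Bijective φ ∧ (∀ a b : Mat n, φ (a * b) = φ b * φ a) ∧
    ∀ a : Mat n, φ aᴴ = (φ a)ᴴ

end Paper

/-! Since `Ad (V* b V) = Ad V ∘ Ad b ∘ Ad V*` and `Ad V` is completely positive, a mapping cone
containing `Ad f` contains `Ad a` for every compression `a = V* f V` of `f`. Diagonalising by
unitaries and permuting the diagonal shows that a projection of rank at most `rank f` is such a
compression of the projection `f`. -/

theorem Finset.exists_perm_mapsTo_of_card_le {α : Type*} [DecidableEq α] {S T : Finset α}
    (h : S.card ≤ T.card) : ∃ σ : Equiv.Perm α, ∀ i ∈ S, σ i ∈ T := by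
  obtain ⟨ι⟩ : Nonempty (S ↪ T) := Function.Embedding.nonempty_of_card_le (by simpa using h)
  obtain ⟨σ, hσ⟩ := Equiv.Perm.exists_extending_pair (Subtype.val : S → α)
    (fun i => (ι i : α)) Subtype.val_injective (Subtype.val_injective.comp ι.injective)
  exact ⟨σ, fun i hi => (hσ ⟨i, hi⟩).symm ▸ (ι ⟨i, hi⟩).2⟩

namespace Matrix

variable {m 𝕜 : Type*} [Fintype m] [RCLike 𝕜]

def IsCompressionOf (a b : Matrix m m 𝕜) : Prop :=
  ∃ V : Matrix m m 𝕜, Vᴴ * b * V = a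

theorem IsCompressionOf.trans {a b c : Matrix m m 𝕜} (hab : IsCompressionOf a b)
    (hbc : IsCompressionOf b c) : IsCompressionOf a c := by
  obtain ⟨V, rfl⟩ := hab
  obtain ⟨W, rfl⟩ := hbc
  exact ⟨W * V, by simp only [conjTranspose_mul, Matrix.mul_assoc]⟩

theorem isCompressionOf_mul_mul_conjTranspose (U a : Matrix m m 𝕜) :
    IsCompressionOf (U * a * Uᴴ) a :=
  ⟨Uᴴ, by rw [conjTranspose_conjTranspose]⟩

theorem isCompressionOf_of_mem_unitaryGroup [DecidableEq m] {U : Matrix m m 𝕜}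
    (hU : U ∈ unitaryGroup m 𝕜) (a : Matrix m m 𝕜) : IsCompressionOf a (U * a * Uᴴ) :=
  ⟨U, by
    rw [← star_eq_conjTranspose]
    simp only [Matrix.mul_assoc, Unitary.star_mul_self_of_mem hU, Matrix.mul_one]
    rw [← Matrix.mul_assoc, Unitary.star_mul_self_of_mem hU, Matrix.one_mul]⟩

theorem isCompressionOf_diagonal_comp_perm [DecidableEq m] (d : m → 𝕜) (σ : Equiv.Perm m) :
    IsCompressionOf (diagonal (d ∘ σ)) (diagonal d) :=
  ⟨(σ⁻¹).permMatrix 𝕜, by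
    rw [conjTranspose_permMatrix, inv_inv, PEquiv.toMatrix_toPEquiv_mul,
      PEquiv.mul_toMatrix_toPEquiv, submatrix_submatrix]
    exact submatrix_diagonal_equiv d σ⟩

theorem isCompressionOf_diagonal_indicator [DecidableEq m] (S : Finset m) {d : m → 𝕜}
    (hd : ∀ i ∈ S, d i = 1) :
    IsCompressionOf (diagonal fun i => if i ∈ S then 1 else 0) (diagonal d) := by
  refine ⟨diagonal fun i => if i ∈ S then 1 else 0, ?_⟩
  rw [diagonal_conjTranspose, diagonal_mul_diagonal, diagonal_mul_diagonal]
  congr 1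
  ext i
  by_cases hi : i ∈ S <;> simp [hi, hd]

theorem isCompressionOf_diagonal_indicator_of_card_le [DecidableEq m] {S T : Finset m}
    (h : S.card ≤ T.card) :
    IsCompressionOf (diagonal fun i => if i ∈ S then (1 : 𝕜) else 0)
      (diagonal fun i => if i ∈ T then 1 else 0) := by
  obtain ⟨σ, hσ⟩ := Finset.exists_perm_mapsTo_of_card_le h
  exact (isCompressionOf_diagonal_indicator S fun i hi => if_pos (hσ i hi)).trans
    (isCompressionOf_diagonal_comp_perm _ σ)

theorem IsHermitian.eigenvalues_eq_zero_or_one [DecidableEq m] {e : Matrix m m 𝕜}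
    (hh : e.IsHermitian) (he : IsIdempotentElem e) (i : m) :
    hh.eigenvalues i = 0 ∨ hh.eigenvalues i = 1 := by
  simpa using he.spectrum_subset ℝ (hh.eigenvalues_mem_spectrum_real i)

theorem IsHermitian.exists_isCompressionOf_diagonal_indicator [DecidableEq m]
    {e : Matrix m m 𝕜} (hh : e.IsHermitian) (he : IsIdempotentElem e) :
    ∃ S : Finset m, S.card = e.rank ∧
      IsCompressionOf e (diagonal fun i => if i ∈ S then 1 else 0) ∧
      IsCompressionOf (diagonal fun i => if i ∈ S then 1 else 0) e := by
  set S := Finset.univ.filter fun i => hh.eigenvalues i ≠ 0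
  set U : Matrix m m 𝕜 := (hh.eigenvectorUnitary : Matrix m m 𝕜)
  have hdiag :
      (RCLike.ofReal ∘ hh.eigenvalues : m → 𝕜) = fun i => if i ∈ S then 1 else 0 := by
    ext i
    rcases hh.eigenvalues_eq_zero_or_one he i with h | h <;> simp [S, h]
  have hspec : e = U * (diagonal fun i => if i ∈ S then 1 else 0) * Uᴴ := by
    simpa only [Unitary.conjStarAlgAut_apply, hdiag, star_eq_conjTranspose] using
      hh.spectral_theorem
  refine ⟨S, ?_, ?_, ?_⟩
  · rw [hh.rank_eq_card_non_zero_eigs, Fintype.card_subtype]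
  · conv_lhs => rw [hspec]
    exact isCompressionOf_mul_mul_conjTranspose _ _
  · conv_rhs => rw [hspec]
    exact isCompressionOf_of_mem_unitaryGroup hh.eigenvectorUnitary.2 _

theorem isCompressionOf_of_rank_le [DecidableEq m] {e f : Matrix m m 𝕜}
    (he : e.IsHermitian) (he' : IsIdempotentElem e) (hf : f.IsHermitian)
    (hf' : IsIdempotentElem f) (h : e.rank ≤ f.rank) : IsCompressionOf e f := by
  obtain ⟨S, hS, heS, -⟩ := he.exists_isCompressionOf_diagonal_indicator he'
  obtain ⟨T, hT, -, hTf⟩ := hf.exists_isCompressionOf_diagonal_indicator hf'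
  exact heS.trans ((isCompressionOf_diagonal_indicator_of_card_le (hS ▸ hT ▸ h)).trans hTf)

end Matrix

namespace Paper

theorem adMap_conjTranspose_mul_mul {n : ℕ} (V b : Mat n) :
    adMap (Vᴴ * b * V) = adMap V ∘ₗ adMap b ∘ₗ adMap Vᴴ := by
  ext1 x
  simp only [adMap, LinearMap.coe_comp, LinearMap.coe_mk, AddHom.coe_mk, Function.comp_apply,
    conjTranspose_mul, conjTranspose_conjTranspose, Matrix.mul_assoc]

theorem isCP_adMap {n : ℕ} (V : Mat n) : IsCP (adMap V) := by
  have hchoi : choiMatrix (adMap V) = vecMulVec (star fun p => V p.1 p.2) fun p => V p.1 p.2 := by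
    ext p q
    simp [choiMatrix, adMap, Matrix.mul_apply, Matrix.single_apply, vecMulVec_apply, ite_and,
      Finset.sum_ite_eq]
  rw [IsCP, hchoi]
  exact posSemidef_vecMulVec_star_self _

theorem IsMappingCone.adMap_mem_of_isCompressionOf {n : ℕ} {J : Set (MatMap n)}
    (hJ : IsMappingCone J) {a b : Mat n} (hb : adMap b ∈ J) (hab : IsCompressionOf a b) :
    adMap a ∈ J := by
  obtain ⟨V, rfl⟩ := hab
  rw [adMap_conjTranspose_mul_mul]
  exact hJ.comp_mem _ hb _ _ (isCP_adMap V) (isCP_adMap Vᴴ)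

theorem statement_7_general (n : ℕ) (J : Set (MatMap n)) (hJ : IsInvariantMappingCone J)
    (k : ℕ)
    (hmax : ∃ e : Mat n, IsProjection e ∧ adMap e ∈ J ∧ e.rank = k)
    (e : Mat n) (he : IsProjection e) (hrank : e.rank ≤ k) :
    adMap e ∈ J := by
  obtain ⟨f, hf, hfJ, rfl⟩ := hmax
  exact hJ.adMap_mem_of_isCompressionOf hfJ (isCompressionOf_of_rank_le he.2 he.1 hf.2 hf.1 hrank)

/-- Theorem 5 (ii). Let `J` be an invariant mapping cone and
`k = max {rank e : Ad e ∈ J} ≥ 2`.  If `e` is a projection with `rank e ≤ k`,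
then `Ad e ∈ J`. -/
theorem statement_7 (n : ℕ) (J : Set (MatMap n)) (hJ : IsInvariantMappingCone J)
    (k : ℕ)
    (hmax : ∃ e : Mat n, IsProjection e ∧ adMap e ∈ J ∧ e.rank = k)
    (hbound : ∀ e : Mat n, IsProjection e → adMap e ∈ J → e.rank ≤ k)
    (hk : 2 ≤ k)
    (e : Mat n) (he : IsProjection e) (hrank : e.rank ≤ k) :
    adMap e ∈ J :=
  statement_7_general n J hJ k hmax e he hrank

end Paper
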